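/- arXiv:2109.08212 — 5 statements merged into one kernel-verified Lean document; each statement's English description precedes it below -/
import Mathlib

section
/- Let φ and ψ be two structural sets in ℝ_{0,m} and let {j₁,...,j_k} ⊆ {1,...,m} with k odd. Then the real-linear map on ℝ_{0,m} defined by a ↦ Σᵢ₌₁ᵏ φ^{jᵢ} a ψ^{jᵢ} is a bijection. -/
open CliffordAlgebra

noncomputable section

/-- The quadratic form of `ℝ_{0,m}`: negative definite on `ℝ^m`. -/
abbrev Qf (m : ℕ) : QuadraticForm ℝ (Fin m → ℝ) :=
  QuadraticMap.weightedSumSquares ℝ (fun _ : Fin m => (-1 : ℝ))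

/-- The real Clifford algebra `ℝ_{0,m}`. -/
abbrev Cl (m : ℕ) := CliffordAlgebra (Qf m)

/-- A structural set: an orthonormal basis `ψ¹,…,ψᵐ` of `ℝᵐ`. -/
def IsStructuralSet {m : ℕ} (ψ : Fin m → (Fin m → ℝ)) : Prop :=
  ∀ i j, (∑ t, ψ i t * ψ j t) = if i = j then (1 : ℝ) else 0

/-- The ordered product `ψ_A = ψ^{j₁} ⋯ ψ^{j_k}` for `A = {j₁ < ⋯ < j_k}`. -/
def prodS {m : ℕ} (ψ : Fin m → (Fin m → ℝ)) (A : Finset (Fin m)) : Cl m :=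
  ((A.sort (· ≤ ·)).map (fun i => ι (Qf m) (ψ i))).prod

/-- The operator `Ψ_k^{φ,ψ}(a) = Σ_{|A|=k} φ_A a ψ̂_A`. -/
def PsiK {m : ℕ} (φ ψ : Fin m → (Fin m → ℝ)) (k : ℕ) (a : Cl m) : Cl m :=
  ∑ A ∈ Finset.univ.filter (fun A : Finset (Fin m) => A.card = k),
    prodS φ A * a * reverse (prodS ψ A)

/-- `Ψ₊ = Σ_{k even} Ψ_k`. -/
def PsiPlus {m : ℕ} (φ ψ : Fin m → (Fin m → ℝ)) (a : Cl m) : Cl m :=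
  ∑ k ∈ (Finset.range (m + 1)).filter (fun k => Even k), PsiK φ ψ k a

/-- `Ψ₋ = Σ_{k odd} Ψ_k`. -/
def PsiMinus {m : ℕ} (φ ψ : Fin m → (Fin m → ℝ)) (a : Cl m) : Cl m :=
  ∑ k ∈ (Finset.range (m + 1)).filter (fun k => Odd k), PsiK φ ψ k a

/-- `Ψ₁^{φ,ψ}(a) = Σⱼ φʲ a ψʲ`. -/
def Psi1 {m : ℕ} (φ ψ : Fin m → (Fin m → ℝ)) (a : Cl m) : Cl m :=
  ∑ j, ι (Qf m) (φ j) * a * ι (Qf m) (ψ j)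

/-- The standard basis of `ℝᵐ`. -/
def stdB {m : ℕ} (i : Fin m) : Fin m → ℝ := Pi.single i 1

/-- The basis multivector `e_A`. -/
def eA {m : ℕ} (A : Finset (Fin m)) : Cl m := prodS stdB A

/-- The element with coefficients `c` in the multivector basis. -/
def toCl {m : ℕ} (c : Finset (Fin m) → ℝ) : Cl m := ∑ A, c A • eA A

/-- The space `ℝ_{0,m}^{(k)}` of `k`-grade multivectors. -/
def gradeK (m k : ℕ) : Submodule ℝ (Cl m) :=
  Submodule.span ℝ {x | ∃ A : Finset (Fin m), A.card = k ∧ x = eA A}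

/-- Coefficient functions of `ℝ_{0,m}`-valued maps. -/
abbrev Coef (m : ℕ) := Finset (Fin m) → ℝ

/-- The coefficients of the even part `f₊`. -/
def cEven {m : ℕ} (c : Coef m) : Coef m := fun A => if Even A.card then c A else 0

/-- The coefficients of the odd part `f₋`. -/
def cOdd {m : ℕ} (c : Coef m) : Coef m := fun A => if Odd A.card then c A else 0

/-- The even part of a Clifford number. -/
def evenPart {m : ℕ} (a : Cl m) : Cl m :=
  (DirectSum.decompose (evenOdd (Qf m)) a 0 : evenOdd (Qf m) 0)

/-- The odd part of a Clifford number. -/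
def oddPart {m : ℕ} (a : Cl m) : Cl m :=
  (DirectSum.decompose (evenOdd (Qf m)) a 1 : evenOdd (Qf m) 1)

/-- Partial derivative `∂F/∂xᵢ` of a coefficient function. -/
def pd {m : ℕ} (i : Fin m) (F : (Fin m → ℝ) → Coef m) : (Fin m → ℝ) → Coef m :=
  fun x => fderiv ℝ F x (Pi.single i 1)

/-- The sandwich operator `φ∂[f]ψ∂ = Σᵢⱼ φⁱ (∂²f/∂xᵢ∂xⱼ) ψʲ` for `f = Σ_A F_A e_A`. -/
def sandwichD {m : ℕ} (φ ψ : Fin m → (Fin m → ℝ)) (F : (Fin m → ℝ) → Coef m)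
    (x : Fin m → ℝ) : Cl m :=
  ∑ i, ∑ j, ι (Qf m) (φ i) * toCl (pd i (pd j F) x) * ι (Qf m) (ψ j)

/-- The operator `φ∂[ψ∂[f]] = Σᵢⱼ φⁱ ψʲ ∂²f/∂xᵢ∂xⱼ`. -/
def ddD {m : ℕ} (φ ψ : Fin m → (Fin m → ℝ)) (F : (Fin m → ℝ) → Coef m)
    (x : Fin m → ℝ) : Cl m :=
  ∑ i, ∑ j, ι (Qf m) (φ i) * (ι (Qf m) (ψ j) * toCl (pd i (pd j F) x))

/-- The componentwise Laplacian `Δf = Σᵢ ∂²f/∂xᵢ²`. -/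
def lapD {m : ℕ} (F : (Fin m → ℝ) → Coef m) (x : Fin m → ℝ) : Cl m :=
  ∑ i, toCl (pd i (pd i F) x)

section AuxPsi
open Polynomial

/-- The polynomial `∏_{n=0}^{k} (X - (k - 2n))` whose roots are `k, k-2, …, -k`. -/
def pkAux (k : ℕ) : Polynomial ℝ :=
  ∏ n ∈ Finset.range (k + 1), (X - C ((k : ℝ) - 2 * n))

lemma pkAux_comp_add (k : ℕ) :
    (pkAux (k + 1)).comp (X + C 1) = pkAux k * (X - C ((k : ℝ) - 2 * (k + 1))) := by
  rw [pkAux, Polynomial.prod_comp, Finset.prod_range_succ, pkAux]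
  congr 1
  · refine Finset.prod_congr rfl fun n _ => ?_
    simp only [sub_comp, add_comp, X_comp, C_comp]
    rw [show ((k + 1 : ℕ) : ℝ) - 2 * n = ((k : ℝ) - 2 * n) + 1 by push_cast; ring, map_add]
    ring
  · simp only [sub_comp, add_comp, X_comp, C_comp]
    rw [show ((k + 1 : ℕ) : ℝ) - 2 * ((k + 1 : ℕ) : ℝ) = ((k : ℝ) - 2 * (k + 1)) + 1 by
      push_cast; ring, map_add]
    ring

lemma pkAux_comp_sub (k : ℕ) :
    (pkAux (k + 1)).comp (X - C 1) = pkAux k * (X - C ((k : ℝ) + 2)) := by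
  rw [pkAux, Polynomial.prod_comp, Finset.prod_range_succ', pkAux]
  congr 1
  · refine Finset.prod_congr rfl fun n _ => ?_
    simp only [sub_comp, X_comp, C_comp]
    rw [show ((k + 1 : ℕ) : ℝ) - 2 * ((n + 1 : ℕ) : ℝ) = ((k : ℝ) - 2 * n) - 1 by
      push_cast; ring, map_sub]
    ring
  · simp only [sub_comp, X_comp, C_comp]
    rw [show ((k + 1 : ℕ) : ℝ) - 2 * ((0 : ℕ) : ℝ) = ((k : ℝ) + 2) - 1 by push_cast; ring,
      map_sub]
    ring

variable {E : Type*} [Ring E] [Algebra ℝ E]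

lemma pow_corner (x u w : E) (hxu : Commute x u) (c : ℝ) (hw : u * w = c • w) (n : ℕ) :
    (x + u) ^ n * w = (x + algebraMap ℝ E c) ^ n * w := by
  induction n with
  | zero => simp
  | succ n ih =>
    have h1 : (x + u) * w = (x + algebraMap ℝ E c) * w := by
      rw [add_mul, add_mul, hw, Algebra.smul_def]
    have hcomm : Commute (x + algebraMap ℝ E c) (x + u) :=
      Commute.add_left ((Commute.refl x).add_right hxu)
        (((Algebra.commute_algebraMap_left c x).add_right (Algebra.commute_algebraMap_left c u)))
    calc (x + u) ^ (n + 1) * w = (x + u) ^ n * ((x + u) * w) := by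
          rw [pow_succ, mul_assoc]
      _ = (x + u) ^ n * ((x + algebraMap ℝ E c) * w) := by rw [h1]
      _ = (x + algebraMap ℝ E c) * ((x + u) ^ n * w) := by
          rw [← mul_assoc, ← (hcomm.pow_right n).eq, mul_assoc]
      _ = (x + algebraMap ℝ E c) * ((x + algebraMap ℝ E c) ^ n * w) := by rw [ih]
      _ = (x + algebraMap ℝ E c) ^ (n + 1) * w := by rw [pow_succ', mul_assoc]

lemma aeval_corner (x u w : E) (hxu : Commute x u) (c : ℝ) (hw : u * w = c • w)
    (q : Polynomial ℝ) :
    aeval (x + u) q * w = aeval (x + algebraMap ℝ E c) q * w := by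
  induction q using Polynomial.induction_on' with
  | add p q hp hq => rw [map_add, map_add, add_mul, add_mul, hp, hq]
  | monomial n a =>
      rw [aeval_monomial, aeval_monomial, mul_assoc, mul_assoc,
        pow_corner x u w hxu c hw n]

lemma aeval_sum_invol {ι' : Type*} [DecidableEq ι'] (J : Finset ι') (f : ι' → E)
    (h1 : ∀ j ∈ J, f j * f j = 1)
    (hc : ∀ i ∈ J, ∀ j ∈ J, f i * f j = f j * f i) :
    aeval (∑ j ∈ J, f j) (pkAux J.card) = 0 := by
  induction J using Finset.induction_on with
  | empty =>
      simp [pkAux]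
  | @insert a J ha ih =>
      have hmem : a ∈ insert a J := Finset.mem_insert_self a J
      set u : E := f a with hu
      set x : E := ∑ j ∈ J, f j with hx
      have huu : u * u = 1 := h1 a hmem
      have hxu : Commute x u := by
        refine Commute.sum_left _ _ _ fun i hi => ?_
        exact hc i (Finset.mem_insert_of_mem hi) a hmem
      have hk : (insert a J).card = J.card + 1 := Finset.card_insert_of_notMem ha
      have hsum : ∑ j ∈ insert a J, f j = x + u := by
        rw [Finset.sum_insert ha, add_comm]
      rw [hk, hsum]
      have ih' : aeval x (pkAux J.card) = 0 :=
        ih (fun j hj => h1 j (Finset.mem_insert_of_mem hj))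
          (fun i hi j hj => hc i (Finset.mem_insert_of_mem hi) j (Finset.mem_insert_of_mem hj))
      set k := J.card
      set A : E := aeval (x + u) (pkAux (k + 1)) with hA
      have hplus : u * (1 + u) = (1 : ℝ) • (1 + u) := by
        rw [mul_add, mul_one, huu, one_smul, add_comm]
      have hminus : u * (1 - u) = (-1 : ℝ) • (1 - u) := by
        rw [mul_sub, mul_one, huu, neg_smul, one_smul, neg_sub]
      have haplus : A * (1 + u) = 0 := by
        rw [hA, aeval_corner x u _ hxu 1 hplus, map_one]
        have hcomp := aeval_comp (x := x) (p := pkAux (k + 1)) (q := X + C 1)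
        have hz : aeval x ((pkAux (k + 1)).comp (X + C 1)) = 0 := by
          rw [pkAux_comp_add, map_mul, ih', zero_mul]
        have : aeval (x + 1) (pkAux (k + 1)) = 0 := by
          have e1 : (x + 1 : E) = aeval x (X + C (1:ℝ)) := by simp
          rw [e1]
          exact hcomp.symm.trans hz
        rw [this, zero_mul]
      have haminus : A * (1 - u) = 0 := by
        rw [hA, aeval_corner x u _ hxu (-1) hminus, map_neg, map_one]
        have hcomp := aeval_comp (x := x) (p := pkAux (k + 1)) (q := X - C 1)
        have hz : aeval x ((pkAux (k + 1)).comp (X - C 1)) = 0 := by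
          rw [pkAux_comp_sub, map_mul, ih', zero_mul]
        have : aeval (x + (-1)) (pkAux (k + 1)) = 0 := by
          have e1 : (x + (-1) : E) = aeval x (X - C (1:ℝ)) := by simp [sub_eq_add_neg]
          rw [e1]
          exact hcomp.symm.trans hz
        rw [this, zero_mul]
      have h2 : A + A = 0 := by
        have h4 : A * ((1 + u) + (1 - u)) = 0 := by
          rw [mul_add, haplus, haminus, add_zero]
        rw [show ((1 + u) + (1 - u) : E) = 2 by noncomm_ring; simp, mul_two] at h4
        exact h4
      have : (2 : ℝ) • A = 0 := by rw [two_smul]; exact h2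
      calc A = ((2 : ℝ)⁻¹) • ((2 : ℝ) • A) := by
            rw [smul_smul, inv_mul_cancel₀ two_ne_zero, one_smul]
        _ = 0 := by rw [this, smul_zero]

lemma isUnit_sum_invol {ι' : Type*} [DecidableEq ι'] (J : Finset ι') (f : ι' → E)
    (h1 : ∀ j ∈ J, f j * f j = 1)
    (hc : ∀ i ∈ J, ∀ j ∈ J, f i * f j = f j * f i)
    (hodd : Odd J.card) :
    IsUnit (∑ j ∈ J, f j) := by
  set x : E := ∑ j ∈ J, f j with hxdef
  have h0 := aeval_sum_invol J f h1 hc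
  set k := J.card
  set c : ℝ := (pkAux k).coeff 0 with hcdef
  have hcne : c ≠ 0 := by
    rw [hcdef, coeff_zero_eq_eval_zero, pkAux, eval_prod]
    refine Finset.prod_ne_zero_iff.mpr fun n hn => ?_
    simp only [eval_sub, eval_X, eval_C, zero_sub, neg_ne_zero, sub_ne_zero]
    intro h
    have hnat : (k : ℝ) = ((2 * n : ℕ) : ℝ) := by push_cast; linarith
    have : k = 2 * n := Nat.cast_injective hnat
    have hodd2 := Nat.odd_iff.mp hodd
    omega
  have key : x * aeval x ((pkAux k).divX) = algebraMap ℝ E (-c) := by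
    have h2 := congrArg (aeval x) (Polynomial.X_mul_divX_add (pkAux k))
    rw [map_add, map_mul, aeval_X, aeval_C, h0] at h2
    rw [map_neg]
    exact eq_neg_of_add_eq_zero_left h2
  have hcomm : aeval x ((pkAux k).divX) * x = x * aeval x ((pkAux k).divX) := by
    have h3 : aeval x ((pkAux k).divX * X) = aeval x (X * (pkAux k).divX) := by
      rw [mul_comm]
    simpa [map_mul] using h3
  refine ⟨⟨x, (-c)⁻¹ • aeval x ((pkAux k).divX), ?_, ?_⟩, rfl⟩
  · rw [mul_smul_comm, key, Algebra.algebraMap_eq_smul_one, smul_smul,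
      inv_mul_cancel₀ (neg_ne_zero.mpr hcne), one_smul]
  · rw [smul_mul_assoc, hcomm, key, Algebra.algebraMap_eq_smul_one, smul_smul,
      inv_mul_cancel₀ (neg_ne_zero.mpr hcne), one_smul]

end AuxPsi


lemma Qf_apply {m : ℕ} (v : Fin m → ℝ) : Qf m v = -∑ t, v t * v t := by
  rw [QuadraticMap.weightedSumSquares_apply]
  simp [smul_eq_mul, Finset.sum_neg_distrib]

lemma polar_Qf {m : ℕ} (v w : Fin m → ℝ) :
    QuadraticMap.polar (Qf m) v w = -2 * ∑ t, v t * w t := by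
  rw [QuadraticMap.polar, Qf_apply, Qf_apply, Qf_apply]
  have h : ∀ s1 s2 s3 : ℝ, -s1 - -s2 - -s3 = (s2 + s3) - s1 := by intros; ring
  rw [h, ← Finset.sum_add_distrib, ← Finset.sum_sub_distrib, Finset.mul_sum]
  exact Finset.sum_congr rfl fun t _ => by simp only [Pi.add_apply]; ring

lemma ι_sq_structural {m : ℕ} {φ : Fin m → (Fin m → ℝ)} (hφ : IsStructuralSet φ) (j : Fin m) :
    ι (Qf m) (φ j) * ι (Qf m) (φ j) = -1 := by
  rw [ι_sq_scalar, Qf_apply, hφ j j, if_pos rfl, map_neg, map_one]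

lemma ι_anticomm {m : ℕ} {φ : Fin m → (Fin m → ℝ)} (hφ : IsStructuralSet φ)
    {i j : Fin m} (hij : i ≠ j) :
    ι (Qf m) (φ i) * ι (Qf m) (φ j) = -(ι (Qf m) (φ j) * ι (Qf m) (φ i)) := by
  have h := ι_mul_ι_add_swap (Q := Qf m) (φ i) (φ j)
  rw [polar_Qf, hφ i j, if_neg hij, mul_zero, map_zero] at h
  exact eq_neg_of_add_eq_zero_left h

lemma sandwich_sq {m : ℕ} (p q a : Cl m) (hp : p * p = -1) (hq : q * q = -1) :
    p * (p * (a * q) * q) = a := by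
  have h : p * (p * (a * q) * q) = p * p * a * (q * q) := by noncomm_ring
  rw [h, hp, hq]
  noncomm_ring

lemma sandwich_comm {m : ℕ} (p p' q q' a : Cl m)
    (hpp : p' * p = -(p * p')) (hqq : q * q' = -(q' * q)) :
    p * (p' * (a * q') * q) = p' * (p * (a * q) * q') := by
  have l : p * (p' * (a * q') * q) = p * p' * a * (q' * q) := by noncomm_ring
  have r : p' * (p * (a * q) * q') = p' * p * a * (q * q') := by noncomm_ring
  rw [l, r, hpp, hqq]
  noncomm_ring


/-- for structural sets `φ, ψ` and `J = {j₁,…,j_k}` with `k` odd,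
the map `a ↦ Σᵢ φ^{jᵢ} a ψ^{jᵢ}` is a real-linear bijection of `ℝ_{0,m}`. -/
theorem psi_one_sub_bijective {m : ℕ} (φ ψ : Fin m → (Fin m → ℝ))
    (hφ : IsStructuralSet φ) (hψ : IsStructuralSet ψ)
    (J : Finset (Fin m)) (hJ : Odd J.card) :
    IsLinearMap ℝ (fun a : Cl m => ∑ j ∈ J, ι (Qf m) (φ j) * a * ι (Qf m) (ψ j)) ∧
      Function.Bijective
        (fun a : Cl m => ∑ j ∈ J, ι (Qf m) (φ j) * a * ι (Qf m) (ψ j)) := by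
  classical
  set g : Fin m → Module.End ℝ (Cl m) :=
    fun j => LinearMap.mulLeft ℝ (ι (Qf m) (φ j)) * LinearMap.mulRight ℝ (ι (Qf m) (ψ j))
    with hg
  have hfun : (fun a : Cl m => ∑ j ∈ J, ι (Qf m) (φ j) * a * ι (Qf m) (ψ j))
      = ⇑(∑ j ∈ J, g j) := by
    funext a
    rw [LinearMap.sum_apply]
    refine Finset.sum_congr rfl fun j _ => ?_
    show ι (Qf m) (φ j) * a * ι (Qf m) (ψ j) = ι (Qf m) (φ j) * (a * ι (Qf m) (ψ j))
    rw [mul_assoc]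
  have h1 : ∀ j ∈ J, g j * g j = 1 := by
    intro j _
    apply LinearMap.ext; intro a
    show ι (Qf m) (φ j) * (ι (Qf m) (φ j) * (a * ι (Qf m) (ψ j)) * ι (Qf m) (ψ j)) = a
    exact sandwich_sq _ _ _ (ι_sq_structural hφ j) (ι_sq_structural hψ j)
  have hcomm : ∀ i ∈ J, ∀ j ∈ J, g i * g j = g j * g i := by
    intro i _ j _
    by_cases hij : i = j
    · rw [hij]
    · apply LinearMap.ext; intro a
      show ι (Qf m) (φ i) * (ι (Qf m) (φ j) * (a * ι (Qf m) (ψ j)) * ι (Qf m) (ψ i))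
          = ι (Qf m) (φ j) * (ι (Qf m) (φ i) * (a * ι (Qf m) (ψ i)) * ι (Qf m) (ψ j))
      exact sandwich_comm _ _ _ _ _
        (ι_anticomm hφ (fun h => hij h.symm))
        (ι_anticomm hψ hij)
  have hunit := isUnit_sum_invol J g h1 hcomm hJ
  have hbij := (Module.End.isUnit_iff _).mp hunit
  refine ⟨?_, ?_⟩
  · rw [hfun]
    exact ⟨fun a b => map_add _ a b, fun c a => map_smul _ c a⟩
  · rw [hfun]
    exact hbij
end
end

section
/- If the elements a₁,...,a_{k+2} of ℝ_{0,m} satisfy φ^{j₁} a ψ^{j₁} = φ^{jᵢ} a ψ^{jᵢ} for all i = 2,...,k+2, and Σᵢ₌₁^{k+2} φ^{jᵢ} a ψ^{jᵢ} = 0, then a = 0. -/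
open CliffordAlgebra

noncomputable section

lemma Qf_struct {m : ℕ} {φ : Fin m → (Fin m → ℝ)} (hφ : IsStructuralSet φ) (i : Fin m) :
    Qf m (φ i) = -1 := by
  rw [QuadraticMap.weightedSumSquares_apply]
  have h := hφ i i
  simp only [if_pos rfl] at h
  simp only [if_true] at h
  simp only [smul_eq_mul, neg_one_mul]
  rw [Finset.sum_neg_distrib, h]

lemma ausage {m : ℕ} {φ : Fin m → (Fin m → ℝ)} (hφ : IsStructuralSet φ) (i : Fin m) :
    ι (Qf m) (φ i) * ι (Qf m) (φ i) = algebraMap ℝ (Cl m) (-1) := by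
  rw [ι_sq_scalar, Qf_struct hφ]

/-- if `φ^{j₁} a ψ^{j₁} = φ^{jᵢ} a ψ^{jᵢ}` for all `i = 2,…,k+2` and
`Σᵢ φ^{jᵢ} a ψ^{jᵢ} = 0`, then `a = 0`. -/
theorem eq_sandwiches_sum_zero_imp_zero {m k : ℕ} (φ ψ : Fin m → (Fin m → ℝ))
    (hφ : IsStructuralSet φ) (hψ : IsStructuralSet ψ)
    (j : Fin (k + 2) → Fin m) (hj : Function.Injective j) (a : Cl m)
    (h1 : ∀ i : Fin (k + 2), i ≠ 0 →
      ι (Qf m) (φ (j 0)) * a * ι (Qf m) (ψ (j 0)) =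
        ι (Qf m) (φ (j i)) * a * ι (Qf m) (ψ (j i)))
    (h2 : ∑ i : Fin (k + 2), ι (Qf m) (φ (j i)) * a * ι (Qf m) (ψ (j i)) = 0) :
    a = 0 := by
  set s := ι (Qf m) (φ (j 0)) * a * ι (Qf m) (ψ (j 0)) with hs
  have hsum : ∑ i : Fin (k + 2), ι (Qf m) (φ (j i)) * a * ι (Qf m) (ψ (j i)) =
      (k + 2 : ℕ) • s := by
    rw [Finset.sum_congr rfl (fun i _ => ?_), Finset.sum_const, Finset.card_univ,
      Fintype.card_fin]
    by_cases hi : i = 0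
    · rw [hi]
    · exact (h1 i hi).symm
  have hs0 : s = 0 := by
    have := hsum.symm.trans h2
    have hk : ((k + 2 : ℕ) : ℝ) ≠ 0 := by positivity
    have h3 : ((k + 2 : ℕ) : ℝ) • s = 0 := by
      rw [Nat.cast_smul_eq_nsmul]; exact this
    rcases smul_eq_zero.mp h3 with h | h
    · exact absurd h hk
    · exact h
  have key : ι (Qf m) (φ (j 0)) * s * ι (Qf m) (ψ (j 0)) = a := by
    rw [hs]
    have h1 := ausage hφ (j 0)
    have h2 := ausage hψ (j 0)
    calc ι (Qf m) (φ (j 0)) * (ι (Qf m) (φ (j 0)) * a * ι (Qf m) (ψ (j 0))) * ι (Qf m) (ψ (j 0))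
        = (ι (Qf m) (φ (j 0)) * ι (Qf m) (φ (j 0))) * a * (ι (Qf m) (ψ (j 0)) * ι (Qf m) (ψ (j 0))) := by noncomm_ring
      _ = a := by rw [h1, h2]; simp [Algebra.algebraMap_eq_smul_one]
  rw [← key, hs0, mul_zero, zero_mul]
end
end

section
/- Let φ be a structural set in ℝ_{0,m} with m odd. Then for every a ∈ ℝ_{0,m} and every j = 0,...,m, one has Ψⱼ^{φ,φ}(a) = -Ψ_{m-j}^{φ,φ}(a). -/
open CliffordAlgebra

noncomputable section

/-!
For `m` odd the pseudoscalar `ω = φ¹ ⋯ φᵐ` is central: each `φⁱ` anticommutes with the `m - 1`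
other factors, an even number, and the `φⁱ` span `ℝᵐ`. Moreover `ω ω̂ = (-1)ᵐ = -1`.
Since `φ_A φ_{Aᶜ} = ±ω` and `φ̂_A φ_A = ±1`, this gives `φ_{Aᶜ} a φ̂_{Aᶜ} = -φ̂_A a φ_A`, and the
right-hand side is `-φ_A a φ̂_A` because `φ̂_A = ±φ_A`. Summing over the bijection `A ↦ Aᶜ`
between `j`-subsets and `(m - j)`-subsets proves the theorem.
-/

section AnticommutingProducts

variable {R ι : Type*} [Ring R] {e : ι → R}

theorem exists_prod_map_eq_units_smul_of_perm
    (hanti : Pairwise fun i j => e i * e j = -(e j * e i)) {l l' : List ι} (h : l.Perm l') :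
    ∃ u : ℤˣ, (l.map e).prod = u • (l'.map e).prod := by
  induction h with
  | nil => exact ⟨1, by simp⟩
  | cons x _ ih =>
    obtain ⟨u, hu⟩ := ih
    exact ⟨u, by simp only [List.map_cons, List.prod_cons, hu, mul_smul_comm]⟩
  | swap x y l =>
    by_cases hxy : x = y
    · exact ⟨1, by simp [hxy]⟩
    · refine ⟨-1, ?_⟩
      simp only [List.map_cons, List.prod_cons, ← mul_assoc, hanti (Ne.symm hxy)]
      simp
  | trans _ _ ih₁ ih₂ =>
    obtain ⟨u₁, hu₁⟩ := ih₁
    obtain ⟨u₂, hu₂⟩ := ih₂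
    exact ⟨u₁ * u₂, by rw [hu₁, hu₂, smul_smul]⟩

theorem mul_prod_map_eq_neg_one_pow_smul
    (hanti : Pairwise fun i j => e i * e j = -(e j * e i)) {t : ι} :
    ∀ {l : List ι}, t ∉ l → e t * (l.map e).prod = (-1 : ℤˣ) ^ l.length • ((l.map e).prod * e t)
  | [], _ => by simp
  | x :: l, ht => by
    rw [List.mem_cons, not_or] at ht
    rw [List.map_cons, List.prod_cons, ← mul_assoc, hanti ht.1, neg_mul, mul_assoc,
      mul_prod_map_eq_neg_one_pow_smul hanti ht.2, mul_smul_comm, List.length_cons, pow_succ',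
      mul_smul]
    simp [mul_assoc]

theorem commute_prod_map_of_odd_length [DecidableEq ι]
    (hanti : Pairwise fun i j => e i * e j = -(e j * e i)) {L : List ι} (hL : L.Nodup)
    (hodd : Odd L.length) {t : ι} (ht : t ∈ L) : Commute (e t) (L.map e).prod := by
  obtain ⟨u, hu⟩ := exists_prod_map_eq_units_smul_of_perm hanti (List.perm_cons_erase ht)
  have heven : Even (L.erase t).length := by
    rw [List.length_erase_of_mem ht]
    exact hodd.tsub_odd odd_one
  have hmove := mul_prod_map_eq_neg_one_pow_smul hanti (hL.not_mem_erase (a := t))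
  rw [heven.neg_one_pow, one_smul] at hmove
  rw [Commute, SemiconjBy, hu, List.map_cons, List.prod_cons, mul_smul_comm, smul_mul_assoc]
  congr 1
  rw [hmove, ← mul_assoc, hmove]

theorem prod_map_mul_prod_map_reverse (hsq : ∀ i, e i * e i = -1) :
    ∀ l : List ι, (l.map e).prod * (l.reverse.map e).prod = (-1 : ℤˣ) ^ l.length • 1
  | [] => by simp
  | x :: l => by
    have ih := prod_map_mul_prod_map_reverse hsq l
    simp only [List.reverse_cons, List.map_append, List.prod_append, List.map_cons, List.prod_cons,
      List.map_nil, List.prod_nil, mul_one, List.length_cons]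
    calc e x * (l.map e).prod * ((l.reverse.map e).prod * e x)
        = e x * ((l.map e).prod * (l.reverse.map e).prod) * e x := by simp only [mul_assoc]
      _ = (-1 : ℤˣ) ^ (l.length + 1) • 1 := by
        rw [ih, mul_smul_comm, smul_mul_assoc, mul_one, hsq, pow_succ, mul_smul]
        simp

end AnticommutingProducts

theorem reverse_prodS {m : ℕ} (φ : Fin m → Fin m → ℝ) (A : Finset (Fin m)) :
    reverse (prodS φ A) = ((A.sort (· ≤ ·)).reverse.map fun i => ι (Qf m) (φ i)).prod := by
  have h : (fun i => ι (Qf m) (φ i)) = ι (Qf m) ∘ φ := rfl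
  rw [prodS, h, ← List.map_map, reverse_prod_map_ι, ← List.map_reverse, ← List.map_reverse,
    List.map_map]

namespace IsStructuralSet

variable {m : ℕ} {φ : Fin m → Fin m → ℝ}

theorem ι_mul_ι_self_eq_neg_one (hφ : IsStructuralSet φ) (i : Fin m) :
    ι (Qf m) (φ i) * ι (Qf m) (φ i) = -1 := by
  have h := hφ i i
  rw [if_pos rfl] at h
  simp [ι_sq_scalar, QuadraticMap.weightedSumSquares_apply, h]

theorem ι_mul_ι_anticomm (hφ : IsStructuralSet φ) :
    Pairwise fun i j => ι (Qf m) (φ i) * ι (Qf m) (φ j) = -(ι (Qf m) (φ j) * ι (Qf m) (φ i)) := by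
  intro i j hij
  apply ι_mul_ι_comm_of_isOrtho
  have h := hφ i j
  rw [if_neg hij] at h
  simp only [QuadraticMap.isOrtho_def, QuadraticMap.weightedSumSquares_apply, Pi.add_apply,
    smul_eq_mul, add_mul, mul_add, Finset.sum_add_distrib, neg_one_mul, Finset.sum_neg_distrib]
  rw [Finset.sum_congr rfl fun t _ => mul_comm (φ j t) (φ i t), h]
  ring

theorem linearIndependent (hφ : IsStructuralSet φ) : LinearIndependent ℝ φ := by
  have h : Matrix.of φ * (Matrix.of φ).transpose = 1 := by
    ext i j
    simpa [Matrix.mul_apply, Matrix.one_apply] using hφ i j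
  exact Matrix.linearIndependent_rows_iff_isUnit.2 (IsUnit.of_mul_eq_one _ h)

theorem span_eq_top (hφ : IsStructuralSet φ) : Submodule.span ℝ (Set.range φ) = ⊤ :=
  hφ.linearIndependent.span_eq_top_of_card_eq_finrank' (by simp)

theorem commute_prodS_univ (hφ : IsStructuralSet φ) (hm : Odd m) (x : Cl m) :
    Commute (prodS φ Finset.univ) x := by
  set C := Subalgebra.centralizer ℝ {prodS φ Finset.univ}
  have hbasis : ∀ t, ι (Qf m) (φ t) ∈ C := fun t => by
    rw [Subalgebra.mem_centralizer_iff]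
    rintro _ rfl
    refine (commute_prod_map_of_odd_length hφ.ι_mul_ι_anticomm (Finset.sort_nodup _ _) ?_ ?_).symm
    · simpa using hm
    · simp
  have hι : Submodule.span ℝ (Set.range φ) ≤ C.toSubmodule.comap (ι (Qf m)) := by
    rw [Submodule.span_le]
    rintro _ ⟨t, rfl⟩
    exact hbasis t
  have hC : Algebra.adjoin ℝ (Set.range (ι (Qf m))) ≤ C := by
    refine Algebra.adjoin_le ?_
    rintro _ ⟨v, rfl⟩
    exact hι (hφ.span_eq_top ▸ Submodule.mem_top)
  rw [adjoin_range_ι] at hC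
  exact (Subalgebra.mem_centralizer_iff ℝ).1 (hC (Algebra.mem_top : x ∈ ⊤)) _ rfl

theorem prodS_mul_reverse (hφ : IsStructuralSet φ) (A : Finset (Fin m)) :
    prodS φ A * reverse (prodS φ A) = (-1 : ℤˣ) ^ A.card • 1 := by
  rw [reverse_prodS, prodS, prod_map_mul_prod_map_reverse hφ.ι_mul_ι_self_eq_neg_one,
    Finset.length_sort]

theorem reverse_prodS_mul (hφ : IsStructuralSet φ) (A : Finset (Fin m)) :
    reverse (prodS φ A) * prodS φ A = (-1 : ℤˣ) ^ A.card • 1 := by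
  have h := prod_map_mul_prod_map_reverse hφ.ι_mul_ι_self_eq_neg_one (A.sort (· ≤ ·)).reverse
  rwa [List.reverse_reverse, List.length_reverse, Finset.length_sort, ← prodS,
    ← reverse_prodS] at h

theorem exists_reverse_prodS_eq_units_smul (hφ : IsStructuralSet φ) (A : Finset (Fin m)) :
    ∃ u : ℤˣ, reverse (prodS φ A) = u • prodS φ A := by
  rw [reverse_prodS]
  exact exists_prod_map_eq_units_smul_of_perm hφ.ι_mul_ι_anticomm (List.reverse_perm _)

theorem exists_prodS_mul_prodS_compl_eq_units_smul (hφ : IsStructuralSet φ) (A : Finset (Fin m)) :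
    ∃ u : ℤˣ, prodS φ A * prodS φ Aᶜ = u • prodS φ Finset.univ := by
  have hperm : (A.sort (· ≤ ·) ++ Aᶜ.sort (· ≤ ·)).Perm (Finset.univ.sort (· ≤ ·)) := by
    refine (List.perm_ext_iff_of_nodup ?_ (Finset.sort_nodup _ _)).2 fun i => by simp [em]
    refine List.Nodup.append (Finset.sort_nodup _ _) (Finset.sort_nodup _ _) ?_
    simp [List.disjoint_left]
  have h := exists_prod_map_eq_units_smul_of_perm hφ.ι_mul_ι_anticomm hperm
  rwa [List.map_append, List.prod_append] at h

theorem prodS_compl_mul_mul_reverse (hφ : IsStructuralSet φ) (hm : Odd m) (A : Finset (Fin m))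
    (a : Cl m) :
    prodS φ Aᶜ * a * reverse (prodS φ Aᶜ) = -(prodS φ A * a * reverse (prodS φ A)) := by
  obtain ⟨u, hXY⟩ := hφ.exists_prodS_mul_prodS_compl_eq_units_smul A
  obtain ⟨v, hX⟩ := hφ.exists_reverse_prodS_eq_units_smul A
  set X := prodS φ A
  set Y := prodS φ Aᶜ
  set W := prodS φ Finset.univ
  have hYX : reverse Y * reverse X = u • reverse W := by
    rw [← reverse.map_mul, hXY, Units.smul_def, map_zsmul, ← Units.smul_def]
  have hWW : W * reverse W = -1 := by
    rw [hφ.prodS_mul_reverse, Finset.card_univ, Fintype.card_fin, hm.neg_one_pow]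
    simp
  have hconj : X * (Y * a * reverse Y) * reverse X = -a :=
    calc X * (Y * a * reverse Y) * reverse X = X * Y * a * (reverse Y * reverse X) := by
          simp only [mul_assoc]
      _ = (u * u) • (W * a * reverse W) := by
          rw [hXY, hYX, smul_mul_assoc, smul_mul_assoc, mul_smul_comm, smul_smul]
      _ = a * (W * reverse W) := by
          rw [Int.units_mul_self, one_smul, (hφ.commute_prodS_univ hm a).eq, mul_assoc]
      _ = -a := by rw [hWW, mul_neg_one]
  calc Y * a * reverse Y = reverse X * X * (Y * a * reverse Y) * (reverse X * X) := by
        rw [hφ.reverse_prodS_mul, smul_mul_assoc, one_mul, mul_smul_comm, mul_one, smul_smul,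
          Int.units_mul_self, one_smul]
    _ = reverse X * (X * (Y * a * reverse Y) * reverse X) * X := by simp only [mul_assoc]
    _ = -(X * a * reverse X) := by
        rw [hconj, hX]
        simp [smul_mul_assoc, mul_smul_comm]

end IsStructuralSet

/-- for a structural set `φ` with `m` odd,
`Ψⱼ^{φ,φ}(a) = -Ψ_{m-j}^{φ,φ}(a)` for all `a` and `j = 0,…,m`. -/
theorem psiK_neg_psiK_compl {m : ℕ} (φ : Fin m → (Fin m → ℝ))
    (hφ : IsStructuralSet φ) (hm : Odd m) (a : Cl m) :
    ∀ j ≤ m, PsiK φ φ j a = -PsiK φ φ (m - j) a := by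
  intro j hj
  rw [PsiK, PsiK, ← Finset.sum_neg_distrib]
  refine Finset.sum_nbij' compl compl ?_ ?_ (fun A _ => compl_compl A) (fun A _ => compl_compl A)
    fun A _ => by rw [hφ.prodS_compl_mul_mul_reverse hm, neg_neg]
  all_goals
    intro A hA
    simp only [Finset.mem_filter, Finset.mem_univ, true_and,
      Finset.card_compl, Fintype.card_fin] at hA ⊢
    omega
end
end

section
/- Let φ be a structural set in ℝ_{0,m} with m odd. Then for all a ∈ ℝ_{0,m}, Ψ₊^{φ,φ}(a) = -Ψ₋^{φ,φ}(a) = 2^{m-1}([a]₀ + [a]_m). -/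
open CliffordAlgebra

noncomputable section

/-!
Put `Ψ(s) = Σ_k s^k Ψ_k = Σ_A s^|A| φ_A a φ̂_A`, so that `Ψ₊ + Ψ₋ = Ψ(1)` and `Ψ₊ - Ψ₋ = Ψ(-1)`.
The recursion `Ψ₁ ∘ Ψ_{k+1} = (k+2) Ψ_{k+2} + (m-k) Ψ_k`, together with the invariance of
`Ψ₁(a) = Σ_j φʲ a φʲ` under an orthogonal change of frame, shows that the `Ψ_k` do not depend on
the structural set, so `φ` may be replaced by the standard basis. Then `Ψ(s) = ∏_i (1 + s C_i)`
with `C_i(a) = e_i a e_i`, and `C_i e_B = -(-1)^|B \ {i}| e_B`. For `m` odd the product kills every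
`e_B` when `s = 1`, while for `s = -1` it is `2^m` on `e_∅` and `e_{1…m}` and kills all other `e_B`.
-/
section

open Finset

variable {m : ℕ} {ψ : Fin m → Fin m → ℝ}

lemma Qf_polar (u v : Fin m → ℝ) :
    QuadraticMap.polar (Qf m) u v = -2 * ∑ t, u t * v t := by
  simp only [QuadraticMap.polar, QuadraticMap.weightedSumSquares_apply, Pi.add_apply,
    smul_eq_mul, ← sum_sub_distrib, mul_sum]
  exact sum_congr rfl fun t _ => by ring

lemma isStructuralSet_stdB : IsStructuralSet (stdB (m := m)) := by
  intro i j
  simp [stdB, Pi.single_apply, eq_comm]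

lemma IsStructuralSet.transpose (hψ : IsStructuralSet ψ) :
    IsStructuralSet fun i j => ψ j i := by
  let M : Matrix (Fin m) (Fin m) ℝ := Matrix.of ψ
  have hM : M * M.transpose = 1 := by
    ext i j
    simpa [M, Matrix.mul_apply, Matrix.one_apply] using hψ i j
  intro i j
  have h : (M.transpose * M) i j = (1 : Matrix (Fin m) (Fin m) ℝ) i j := by
    rw [mul_eq_one_comm.mp hM]
  simpa [M, Matrix.mul_apply, Matrix.one_apply] using h

lemma IsStructuralSet.ι_mul_self (hψ : IsStructuralSet ψ) (i : Fin m) :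
    ι (Qf m) (ψ i) * ι (Qf m) (ψ i) = -1 := by
  have h := hψ i i
  rw [if_pos rfl] at h
  simp [ι_sq_scalar, QuadraticMap.weightedSumSquares_apply, h]

lemma IsStructuralSet.ι_mul_ι_of_ne (hψ : IsStructuralSet ψ) {i j : Fin m} (h : i ≠ j) :
    ι (Qf m) (ψ i) * ι (Qf m) (ψ j) = -(ι (Qf m) (ψ j) * ι (Qf m) (ψ i)) := by
  have hpolar := ι_mul_ι_add_swap (Q := Qf m) (ψ i) (ψ j)
  rw [Qf_polar, hψ i j, if_neg h, mul_zero, map_zero] at hpolar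
  exact eq_neg_of_add_eq_zero_left hpolar

@[simp] lemma prodS_empty : prodS ψ ∅ = 1 := by
  simp [prodS]

lemma prodS_insert_of_forall_lt {A : Finset (Fin m)} {b : Fin m}
    (hb : ∀ x ∈ A, b < x) : prodS ψ (insert b A) = ι (Qf m) (ψ b) * prodS ψ A := by
  rw [prodS, sort_insert _ (fun x hx => (hb x hx).le) fun h => lt_irrefl b (hb b h)]
  simp [prodS]

lemma IsStructuralSet.prodS_insert (hψ : IsStructuralSet ψ) {A : Finset (Fin m)} {j : Fin m}
    (hj : j ∉ A) :
    ∃ n : ℕ, prodS ψ (insert j A) = (-1 : ℝ) ^ n • (ι (Qf m) (ψ j) * prodS ψ A) := by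
  induction A using Finset.induction_on_min with
  | empty => exact ⟨0, by simp [prodS]⟩
  | insert b A hb ih =>
    have hjA : j ∉ A := fun h => hj (mem_insert_of_mem h)
    rcases lt_or_gt_of_ne (ne_of_mem_of_not_mem (mem_insert_self b A) hj).symm with hjb | hbj
    · refine ⟨0, ?_⟩
      rw [pow_zero, one_smul, prodS_insert_of_forall_lt]
      intro x hx
      rcases mem_insert.mp hx with rfl | hx
      exacts [hjb, hjb.trans (hb x hx)]
    · obtain ⟨n, hn⟩ := ih hjA
      have hb' : ∀ x ∈ insert j A, b < x := by
        intro x hx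
        rcases mem_insert.mp hx with rfl | hx
        exacts [hbj, hb x hx]
      refine ⟨n + 1, ?_⟩
      rw [insert_comm, prodS_insert_of_forall_lt hb', hn, prodS_insert_of_forall_lt hb,
        mul_smul_comm, ← mul_assoc, ← mul_assoc, hψ.ι_mul_ι_of_ne hbj.ne, pow_succ, mul_smul]
      simp

lemma IsStructuralSet.ι_mul_prodS (hψ : IsStructuralSet ψ) (i : Fin m) (B : Finset (Fin m)) :
    ι (Qf m) (ψ i) * prodS ψ B = (-1 : ℝ) ^ #(B.erase i) • (prodS ψ B * ι (Qf m) (ψ i)) := by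
  induction B using Finset.induction_on_min with
  | empty => simp
  | insert b B hb ih =>
    have hbB : b ∉ B := fun h => lt_irrefl b (hb b h)
    rw [prodS_insert_of_forall_lt hb, mul_assoc]
    rcases eq_or_ne i b with rfl | hib
    · rw [erase_insert hbB, ← mul_assoc, hψ.ι_mul_self, ← mul_assoc _ (prodS ψ B), ih,
        erase_eq_of_notMem hbB, smul_mul_assoc, mul_assoc, hψ.ι_mul_self, smul_smul, ← mul_pow]
      simp
    · rw [← mul_assoc, hψ.ι_mul_ι_of_ne hib, neg_mul, mul_assoc, ih,
        erase_insert_of_ne hib.symm, card_insert_of_notMem fun h => hbB (mem_of_mem_erase h),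
        pow_succ, mul_smul_comm, ← mul_assoc]
      simp

lemma IsStructuralSet.ι_mul_prodS_mul_ι (hψ : IsStructuralSet ψ) (i : Fin m)
    (B : Finset (Fin m)) :
    ι (Qf m) (ψ i) * prodS ψ B * ι (Qf m) (ψ i) = -(-1 : ℝ) ^ #(B.erase i) • prodS ψ B := by
  rw [hψ.ι_mul_prodS, smul_mul_assoc, mul_assoc, hψ.ι_mul_self]
  simp

def sandwich (ψ : Fin m → Fin m → ℝ) (A : Finset (Fin m)) (a : Cl m) : Cl m :=
  prodS ψ A * a * reverse (prodS ψ A)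

lemma psiK_eq_sum_sandwich (k : ℕ) (a : Cl m) :
    PsiK ψ ψ k a = ∑ A ∈ univ.filter (fun A : Finset (Fin m) => #A = k), sandwich ψ A a :=
  rfl

lemma ι_mul_sandwich_mul_ι_of_ι_mul_prodS {A B : Finset (Fin m)}
    {j : Fin m} {n : ℕ} (h : ι (Qf m) (ψ j) * prodS ψ A = (-1 : ℝ) ^ n • prodS ψ B) (a : Cl m) :
    ι (Qf m) (ψ j) * sandwich ψ A a * ι (Qf m) (ψ j) = sandwich ψ B a := by
  have hrev : reverse (prodS ψ A) * ι (Qf m) (ψ j) = (-1 : ℝ) ^ n • reverse (prodS ψ B) := by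
    simpa only [reverse.map_mul, reverse_ι, map_smul] using congrArg reverse h
  calc ι (Qf m) (ψ j) * sandwich ψ A a * ι (Qf m) (ψ j)
      = (ι (Qf m) (ψ j) * prodS ψ A) * a * (reverse (prodS ψ A) * ι (Qf m) (ψ j)) := by
        simp only [sandwich, mul_assoc]
    _ = ((-1 : ℝ) ^ n * (-1) ^ n) • sandwich ψ B a := by
        rw [h, hrev, sandwich, smul_mul_assoc, smul_mul_assoc, mul_smul_comm, smul_smul]
    _ = sandwich ψ B a := by rw [← mul_pow]; simp

lemma IsStructuralSet.ι_mul_sandwich_mul_ι_of_notMem (hψ : IsStructuralSet ψ)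
    {A : Finset (Fin m)} {j : Fin m} (hj : j ∉ A) (a : Cl m) :
    ι (Qf m) (ψ j) * sandwich ψ A a * ι (Qf m) (ψ j) = sandwich ψ (insert j A) a := by
  obtain ⟨n, hn⟩ := hψ.prodS_insert hj
  refine ι_mul_sandwich_mul_ι_of_ι_mul_prodS (n := n) ?_ a
  rw [hn, smul_smul, ← mul_pow]
  simp

lemma IsStructuralSet.ι_mul_sandwich_mul_ι_of_mem (hψ : IsStructuralSet ψ)
    {A : Finset (Fin m)} {j : Fin m} (hj : j ∈ A) (a : Cl m) :
    ι (Qf m) (ψ j) * sandwich ψ A a * ι (Qf m) (ψ j) = sandwich ψ (A.erase j) a := by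
  obtain ⟨n, hn⟩ := hψ.prodS_insert (notMem_erase j A)
  rw [insert_erase hj] at hn
  refine ι_mul_sandwich_mul_ι_of_ι_mul_prodS (n := n + 1) ?_ a
  rw [hn, mul_smul_comm, ← mul_assoc, hψ.ι_mul_self, pow_succ, mul_smul]
  simp

def psiGen (ψ : Fin m → Fin m → ℝ) (s : ℝ) (S : Finset (Fin m)) (a : Cl m) : Cl m :=
  ∑ A ∈ S.powerset, s ^ #A • sandwich ψ A a

lemma psiGen_univ (s : ℝ) (a : Cl m) :
    psiGen ψ s univ a = ∑ k ∈ range (m + 1), s ^ k • PsiK ψ ψ k a := by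
  rw [psiGen, powerset_univ, ← sum_fiberwise_of_maps_to (g := card) (t := range (m + 1))]
  · refine sum_congr rfl fun k _ => ?_
    rw [psiK_eq_sum_sandwich, smul_sum]
    exact sum_congr rfl fun A hA => by rw [(mem_filter.mp hA).2]
  · intro A _
    simpa [Nat.lt_succ_iff] using card_le_univ A

lemma psiPlus_add_psiMinus (a : Cl m) :
    PsiPlus ψ ψ a + PsiMinus ψ ψ a = psiGen ψ 1 univ a := by
  simp only [psiGen_univ, one_pow, one_smul, PsiPlus, PsiMinus, ← Nat.not_even_iff_odd,
    sum_filter_add_sum_filter_not]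

lemma psiPlus_sub_psiMinus (a : Cl m) :
    PsiPlus ψ ψ a - PsiMinus ψ ψ a = psiGen ψ (-1) univ a := by
  rw [psiGen_univ, ← sum_filter_add_sum_filter_not _ Even, sub_eq_add_neg, PsiPlus, PsiMinus,
    ← sum_neg_distrib]
  congr 1
  · exact sum_congr rfl fun k hk => by rw [(mem_filter.mp hk).2.neg_one_pow, one_smul]
  · refine sum_congr (by simp [Nat.not_even_iff_odd]) fun k hk => ?_
    rw [(Nat.not_even_iff_odd.mp (mem_filter.mp hk).2).neg_one_pow, neg_one_smul]

lemma IsStructuralSet.psiGen_insert (hψ : IsStructuralSet ψ)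
    {S : Finset (Fin m)} {i : Fin m} (hi : i ∉ S) (s : ℝ) (a : Cl m) :
    psiGen ψ s (insert i S) a =
      psiGen ψ s S a + s • (ι (Qf m) (ψ i) * psiGen ψ s S a * ι (Qf m) (ψ i)) := by
  rw [psiGen, sum_powerset_insert hi, psiGen, mul_sum, sum_mul, smul_sum]
  congr 1
  refine sum_congr rfl fun A hA => ?_
  have hiA : i ∉ A := fun h => hi (mem_powerset.mp hA h)
  rw [card_insert_of_notMem hiA, pow_succ, mul_smul_comm, smul_mul_assoc,
    hψ.ι_mul_sandwich_mul_ι_of_notMem hiA, smul_smul, mul_comm]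

lemma IsStructuralSet.psiGen_prodS (hψ : IsStructuralSet ψ) (s : ℝ)
    (S B : Finset (Fin m)) :
    psiGen ψ s S (prodS ψ B) = (∏ i ∈ S, (1 - s * (-1) ^ #(B.erase i))) • prodS ψ B := by
  induction S using Finset.induction_on with
  | empty => simp [psiGen, sandwich]
  | insert i S hi ih =>
    rw [hψ.psiGen_insert hi, ih, prod_insert hi, mul_smul_comm, smul_mul_assoc,
      hψ.ι_mul_prodS_mul_ι, smul_smul, smul_smul, ← add_smul]
    congr 1
    ring

lemma psiGen_toCl (s : ℝ) (S : Finset (Fin m)) (c : Coef m) :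
    psiGen ψ s S (toCl c) = ∑ B, c B • psiGen ψ s S (eA B) := by
  simp only [psiGen, sandwich, toCl, mul_sum, sum_mul, smul_sum, mul_smul_comm, smul_mul_assoc,
    smul_smul]
  rw [sum_comm]
  simp only [mul_comm]

section Counting

variable {α M : Type*} [Fintype α] [AddCommMonoid M]

lemma sum_sum_filter_eq_sum_card_nsmul {β : Type*} (s : Finset β) (p : α → β → Prop)
    [∀ j B, Decidable (p j B)] (f : β → M) :
    ∑ j, ∑ B ∈ s with p j B, f B = ∑ B ∈ s, #{j | p j B} • f B := by
  simp only [sum_filter]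
  rw [sum_comm]
  exact sum_congr rfl fun B _ => by rw [← sum_filter, sum_const]

variable [DecidableEq α]

lemma sum_mem_card_succ_eq_sum_insert (j : α) (n : ℕ) (g : Finset α → M) :
    ∑ A ∈ univ.filter (fun A : Finset α => #A = n + 1) with j ∈ A, g A =
      ∑ B ∈ univ.filter (fun B : Finset α => #B = n) with j ∉ B, g (insert j B) := by
  refine sum_bij' (fun A _ => A.erase j) (fun B _ => insert j B) ?_ ?_ ?_ ?_ ?_ <;>
    intro A hA <;> simp only [mem_filter, mem_univ, true_and] at hA ⊢
  · exact ⟨by simp [card_erase_of_mem hA.2, hA.1], notMem_erase j A⟩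
  · exact ⟨by simp [card_insert_of_notMem hA.2, hA.1], mem_insert_self j A⟩
  · exact insert_erase hA.2
  · exact erase_insert hA.2
  · rw [insert_erase hA.2]

lemma sum_sum_erase_eq_nsmul (n : ℕ) (f : Finset α → M) :
    ∑ j, ∑ A ∈ univ.filter (fun A : Finset α => #A = n + 1) with j ∈ A, f (A.erase j) =
      (Fintype.card α - n) • ∑ B ∈ univ.filter (fun B : Finset α => #B = n), f B := by
  calc _ = ∑ j, ∑ B ∈ univ.filter (fun B : Finset α => #B = n) with j ∉ B, f B := by
        refine sum_congr rfl fun j _ => ?_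
        rw [sum_mem_card_succ_eq_sum_insert]
        exact sum_congr rfl fun B hB => by rw [erase_insert (mem_filter.mp hB).2]
    _ = _ := by
        rw [sum_sum_filter_eq_sum_card_nsmul, smul_sum]
        refine sum_congr rfl fun B hB => ?_
        rw [← (mem_filter.mp hB).2, ← card_compl, compl_eq_univ_sdiff, filter_notMem_eq_sdiff]

lemma sum_sum_insert_eq_nsmul (n : ℕ) (f : Finset α → M) :
    ∑ j, ∑ A ∈ univ.filter (fun A : Finset α => #A = n) with j ∉ A, f (insert j A) =
      (n + 1) • ∑ B ∈ univ.filter (fun B : Finset α => #B = n + 1), f B := by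
  simp only [← sum_mem_card_succ_eq_sum_insert, sum_sum_filter_eq_sum_card_nsmul, smul_sum]
  refine sum_congr rfl fun B hB => ?_
  rw [filter_mem_eq_inter, univ_inter, (mem_filter.mp hB).2]

end Counting

lemma IsStructuralSet.psi1_psiK_succ (hψ : IsStructuralSet ψ) (k : ℕ)
    (a : Cl m) :
    Psi1 ψ ψ (PsiK ψ ψ (k + 1) a) = (k + 2) • PsiK ψ ψ (k + 2) a + (m - k) • PsiK ψ ψ k a := by
  calc Psi1 ψ ψ (PsiK ψ ψ (k + 1) a)
      = ∑ j, (∑ A ∈ univ.filter (fun A : Finset (Fin m) => #A = k + 1) with j ∈ A,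
            sandwich ψ (A.erase j) a +
          ∑ A ∈ univ.filter (fun A : Finset (Fin m) => #A = k + 1) with j ∉ A,
            sandwich ψ (insert j A) a) := by
        refine sum_congr rfl fun j _ => ?_
        rw [psiK_eq_sum_sandwich, mul_sum, sum_mul, ← sum_filter_add_sum_filter_not _ (j ∈ ·)]
        congr 1 <;> refine sum_congr rfl fun A hA => ?_
        exacts [hψ.ι_mul_sandwich_mul_ι_of_mem (mem_filter.mp hA).2 a,
          hψ.ι_mul_sandwich_mul_ι_of_notMem (mem_filter.mp hA).2 a]
    _ = _ := by
        rw [sum_add_distrib, sum_sum_erase_eq_nsmul k (sandwich ψ · a),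
          sum_sum_insert_eq_nsmul (k + 1) (sandwich ψ · a), Fintype.card_fin,
          add_comm, psiK_eq_sum_sandwich, psiK_eq_sum_sandwich]

lemma psiK_zero (a : Cl m) : PsiK ψ ψ 0 a = a := by
  simp [psiK_eq_sum_sandwich, sandwich, card_eq_zero, filter_eq']

lemma psiK_one (a : Cl m) : PsiK ψ ψ 1 a = Psi1 ψ ψ a := by
  rw [psiK_eq_sum_sandwich, Psi1]
  refine (sum_bij (fun j _ => {j}) (by simp) (fun _ _ _ _ h => singleton_injective h)
    (fun B hB => ?_) fun j _ => by simp [sandwich, prodS]).symm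
  obtain ⟨j, rfl⟩ := card_eq_one.mp (mem_filter.mp hB).2
  exact ⟨j, mem_univ j, rfl⟩

lemma ι_eq_sum_stdB (v : Fin m → ℝ) : ι (Qf m) v = ∑ s, v s • ι (Qf m) (stdB s) := by
  simp_rw [← map_smul, ← map_sum]
  congr 1
  ext t
  simp [stdB, Pi.single_apply]

lemma IsStructuralSet.psi1_eq_stdB {φ : Fin m → Fin m → ℝ} (hφ : IsStructuralSet φ)
    (a : Cl m) : Psi1 φ φ a = Psi1 stdB stdB a := by
  let e : Fin m → Cl m := fun s => ι (Qf m) (stdB s)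
  calc Psi1 φ φ a = ∑ j, ∑ t, ∑ s, (φ j t * φ j s) • (e s * a * e t) := by
        simp only [Psi1, ι_eq_sum_stdB (φ _), sum_mul, mul_sum, smul_mul_assoc, mul_smul_comm,
          smul_sum, smul_smul, e]
    _ = ∑ t, ∑ s, (∑ j, φ j t * φ j s) • (e s * a * e t) := by
        rw [sum_comm]
        simp only [sum_smul]
        exact sum_congr rfl fun t _ => sum_comm
    _ = Psi1 stdB stdB a := by
        simp [hφ.transpose _ _, ite_smul, Psi1, e]

lemma IsStructuralSet.psiK_eq {φ ψ : Fin m → Fin m → ℝ} (hφ : IsStructuralSet φ)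
    (hψ : IsStructuralSet ψ) (k : ℕ) (a : Cl m) : PsiK φ φ k a = PsiK ψ ψ k a := by
  induction k using Nat.twoStepInduction generalizing a with
  | zero => rw [psiK_zero, psiK_zero]
  | one => rw [psiK_one, psiK_one, hφ.psi1_eq_stdB, hψ.psi1_eq_stdB]
  | more k ih₀ ih₁ =>
    have h := hφ.psi1_psiK_succ k a
    rw [ih₁, hφ.psi1_eq_stdB, ← hψ.psi1_eq_stdB, hψ.psi1_psiK_succ, ih₀] at h
    have h' := add_right_cancel h
    rw [← Nat.cast_smul_eq_nsmul ℝ, ← Nat.cast_smul_eq_nsmul ℝ] at h'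
    exact (smul_right_injective (Cl m) (by positivity : ((k + 2 : ℕ) : ℝ) ≠ 0) h').symm

lemma IsStructuralSet.psiGen_univ_eq {φ ψ : Fin m → Fin m → ℝ} (hφ : IsStructuralSet φ)
    (hψ : IsStructuralSet ψ) (s : ℝ) (a : Cl m) : psiGen φ s univ a = psiGen ψ s univ a := by
  simp only [psiGen_univ, hφ.psiK_eq hψ]

section CardErase

variable {α : Type*} [Fintype α] [DecidableEq α]

lemma exists_even_card_erase (hα : Odd (Fintype.card α)) (B : Finset α) :
    ∃ i, Even #(B.erase i) := by
  rcases Nat.even_or_odd #B with hB | hB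
  · have hu : B ≠ univ := fun h => Nat.not_even_iff_odd.mpr hα (by rwa [h, card_univ] at hB)
    obtain ⟨i, hi⟩ := not_forall.mp (mt eq_univ_iff_forall.mpr hu)
    exact ⟨i, by rwa [erase_eq_of_notMem hi]⟩
  · obtain ⟨i, hi⟩ := card_pos.mp hB.pos
    exact ⟨i, by rw [card_erase_of_mem hi]; exact Nat.Odd.sub_odd hB odd_one⟩

lemma exists_odd_card_erase {B : Finset α} (h₀ : B.Nonempty) (hu : B ≠ univ) :
    ∃ i, Odd #(B.erase i) := by
  rcases Nat.even_or_odd #B with hB | hB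
  · obtain ⟨i, hi⟩ := h₀
    refine ⟨i, ?_⟩
    rw [card_erase_of_mem hi]
    exact Nat.Even.sub_odd (card_pos.mpr ⟨i, hi⟩) hB odd_one
  · obtain ⟨i, hi⟩ := not_forall.mp (mt eq_univ_iff_forall.mpr hu)
    exact ⟨i, by rwa [erase_eq_of_notMem hi]⟩

lemma prod_one_sub_neg_one_pow_card_erase (hα : Odd (Fintype.card α)) (B : Finset α) :
    ∏ i, (1 - (-1 : ℝ) ^ #(B.erase i)) = 0 := by
  obtain ⟨i, hi⟩ := exists_even_card_erase hα B
  exact prod_eq_zero (mem_univ i) (by rw [hi.neg_one_pow, sub_self])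

lemma prod_one_add_neg_one_pow_card_erase (hα : Odd (Fintype.card α)) (B : Finset α) :
    ∏ i, (1 + (-1 : ℝ) ^ #(B.erase i)) =
      if B = ∅ ∨ B = univ then 2 ^ Fintype.card α else 0 := by
  split_ifs with hB
  · have h2 : ∀ i, 1 + (-1 : ℝ) ^ #(B.erase i) = 2 := by
      rcases hB with rfl | rfl
      · simp [one_add_one_eq_two]
      · intro i
        rw [card_erase_of_mem (mem_univ i), card_univ, (Nat.Odd.sub_odd hα odd_one).neg_one_pow,
          one_add_one_eq_two]
    simp [h2]
  · push Not at hB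
    obtain ⟨i, hi⟩ := exists_odd_card_erase hB.1 hB.2
    exact prod_eq_zero (mem_univ i) (by rw [hi.neg_one_pow, add_neg_cancel])

end CardErase

lemma psiGen_stdB_one_toCl (hm : Odd m) (c : Coef m) : psiGen stdB 1 univ (toCl c) = 0 := by
  simp [psiGen_toCl, eA, isStructuralSet_stdB.psiGen_prodS,
    prod_one_sub_neg_one_pow_card_erase (α := Fin m) (by simpa using hm)]

lemma psiGen_stdB_neg_one_toCl (hm : Odd m) (c : Coef m) :
    psiGen stdB (-1) univ (toCl c) = (2 : ℝ) ^ m • (c ∅ • (1 : Cl m) + c univ • eA univ) := by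
  have hne : (∅ : Finset (Fin m)) ≠ univ :=
    (univ_nonempty_iff.mpr ⟨⟨0, hm.pos⟩⟩).ne_empty.symm
  simp only [psiGen_toCl, eA, isStructuralSet_stdB.psiGen_prodS, neg_one_mul, sub_neg_eq_add,
    prod_one_add_neg_one_pow_card_erase (α := Fin m) (by simpa using hm), Fintype.card_fin]
  rw [Fintype.sum_eq_add ∅ univ hne]
  · rw [if_pos (Or.inl rfl), if_pos (Or.inr rfl), prodS_empty, smul_add, smul_comm (c ∅),
      smul_comm (c univ)]
  · intro B hB
    simp [hB.1, hB.2]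

end

/-- for a structural set `φ` with `m` odd, for all
`a = Σ_A c_A e_A ∈ ℝ_{0,m}`, `Ψ₊^{φ,φ}(a) = -Ψ₋^{φ,φ}(a) = 2^{m-1}([a]₀ + [a]_m)`. -/
theorem psiPlus_psiMinus_odd_dim {m : ℕ} (φ : Fin m → (Fin m → ℝ))
    (hφ : IsStructuralSet φ) (hm : Odd m) (c : Coef m) :
    PsiPlus φ φ (toCl c) =
        ((2 : ℝ) ^ (m - 1)) • (c ∅ • (1 : Cl m) + c Finset.univ • eA Finset.univ) ∧
      PsiMinus φ φ (toCl c) =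
        -(((2 : ℝ) ^ (m - 1)) • (c ∅ • (1 : Cl m) + c Finset.univ • eA Finset.univ)) := by
  have hsum : PsiPlus φ φ (toCl c) + PsiMinus φ φ (toCl c) = 0 := by
    rw [psiPlus_add_psiMinus, hφ.psiGen_univ_eq isStructuralSet_stdB, psiGen_stdB_one_toCl hm]
  have hdiff : PsiPlus φ φ (toCl c) - PsiMinus φ φ (toCl c) =
      (2 : ℝ) ^ m • (c ∅ • (1 : Cl m) + c Finset.univ • eA Finset.univ) := by
    rw [psiPlus_sub_psiMinus, hφ.psiGen_univ_eq isStructuralSet_stdB,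
      psiGen_stdB_neg_one_toCl hm]
  have hminus : PsiMinus φ φ (toCl c) = -PsiPlus φ φ (toCl c) :=
    eq_neg_of_add_eq_zero_right hsum
  obtain ⟨n, rfl⟩ := hm
  rw [hminus, sub_neg_eq_add, ← two_smul ℝ, pow_succ', mul_smul] at hdiff
  have hplus := smul_right_injective _ (two_ne_zero : (2 : ℝ) ≠ 0) hdiff
  rw [Nat.add_sub_cancel]
  exact ⟨hplus, by rw [hminus, hplus]⟩
end
end

section
/- Let φ, ψ be structural sets in ℝ_{0,m} and f: ℝᵐ → ℝ_{0,m} be C¹-smooth. Then φ∂[Ψ₁^{φ,ψ}(f)] = -2[f]ψ∂ - Ψ₁^{φ,ψ}(φ∂[f]). -/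
open CliffordAlgebra

noncomputable section

lemma polar_eq_aux {m : ℕ} (u v : Fin m → ℝ) :
    QuadraticMap.polar (Qf m) u v = -2 * ∑ t, u t * v t := by
  simp only [QuadraticMap.polar, QuadraticMap.weightedSumSquares_apply, Pi.add_apply,
    smul_eq_mul]
  rw [← Finset.sum_sub_distrib, ← Finset.sum_sub_distrib, Finset.mul_sum]
  congr 1; ext t; ring

lemma anticomm_aux {m : ℕ} (φ : Fin m → (Fin m → ℝ)) (hφ : IsStructuralSet φ) (i j : Fin m) :
    ι (Qf m) (φ i) * ι (Qf m) (φ j) + ι (Qf m) (φ j) * ι (Qf m) (φ i)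
      = algebraMap ℝ (Cl m) (if i = j then -2 else 0) := by
  rw [ι_mul_ι_add_swap, polar_eq_aux, hφ]
  split <;> norm_num

lemma key_aux {m : ℕ} (φ ψ : Fin m → (Fin m → ℝ)) (hφ : IsStructuralSet φ)
    (a : Fin m → Cl m) :
    (∑ i, ι (Qf m) (φ i) * (∑ j, ι (Qf m) (φ j) * a i * ι (Qf m) (ψ j)))
      + (∑ j, ι (Qf m) (φ j) * (∑ i, ι (Qf m) (φ i) * a i) * ι (Qf m) (ψ j))
      = (-2 : ℤ) • ∑ i, a i * ι (Qf m) (ψ i) := by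
  simp only [Finset.mul_sum, Finset.sum_mul]
  rw [Finset.sum_comm (s := Finset.univ) (t := Finset.univ)
    (f := fun j i => ι (Qf m) (φ j) * (ι (Qf m) (φ i) * a i) * ι (Qf m) (ψ j))]
  rw [← Finset.sum_add_distrib]
  have key : ∀ i : Fin m,
      ((∑ j, ι (Qf m) (φ i) * (ι (Qf m) (φ j) * a i * ι (Qf m) (ψ j)))
        + ∑ j, ι (Qf m) (φ j) * (ι (Qf m) (φ i) * a i) * ι (Qf m) (ψ j))
        = (-2 : ℤ) • (a i * ι (Qf m) (ψ i)) := by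
    intro i
    rw [← Finset.sum_add_distrib]
    have h : ∀ j : Fin m,
        ι (Qf m) (φ i) * (ι (Qf m) (φ j) * a i * ι (Qf m) (ψ j))
          + ι (Qf m) (φ j) * (ι (Qf m) (φ i) * a i) * ι (Qf m) (ψ j)
          = (if i = j then (-2:ℝ) else 0) • (a i * ι (Qf m) (ψ j)) := by
      intro j
      have : ι (Qf m) (φ i) * (ι (Qf m) (φ j) * a i * ι (Qf m) (ψ j))
          + ι (Qf m) (φ j) * (ι (Qf m) (φ i) * a i) * ι (Qf m) (ψ j)
          = (ι (Qf m) (φ i) * ι (Qf m) (φ j) + ι (Qf m) (φ j) * ι (Qf m) (φ i))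
            * (a i * ι (Qf m) (ψ j)) := by noncomm_ring
      rw [this, anticomm_aux φ hφ, Algebra.smul_def]
    simp only [h]
    simp only [ite_smul, zero_smul]
    rw [Finset.sum_ite_eq Finset.univ i]
    simp only [Finset.mem_univ, if_true]
    rw [← Int.cast_smul_eq_zsmul ℝ]
    norm_num
  simp only [key, Finset.smul_sum]

/-- for C¹-smooth `f : ℝᵐ → ℝ_{0,m}`,
`φ∂[Ψ₁^{φ,ψ}(f)] = -2[f]ψ∂ - Ψ₁^{φ,ψ}(φ∂[f])`.
(Since `Ψ₁` is linear, `∂ᵢ(Ψ₁∘f) = Ψ₁(∂ᵢf)`, so the left-hand side is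
`Σᵢ φⁱ Ψ₁(∂f/∂xᵢ)`.) -/
theorem dirac_psi1 {m : ℕ} (φ ψ : Fin m → (Fin m → ℝ))
    (hφ : IsStructuralSet φ) (hψ : IsStructuralSet ψ)
    (F : (Fin m → ℝ) → Coef m) (hF : ContDiff ℝ 1 F) :
    ∀ x : Fin m → ℝ,
      (∑ i, ι (Qf m) (φ i) * Psi1 φ ψ (toCl (pd i F x)))
        = -2 • (∑ i, toCl (pd i F x) * ι (Qf m) (ψ i))
            - Psi1 φ ψ (∑ i, ι (Qf m) (φ i) * toCl (pd i F x)) := by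
  intro x
  rw [eq_sub_iff_add_eq]
  simp only [Psi1]
  exact key_aux φ ψ hφ (fun i => toCl (pd i F x))
end
end
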